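/- Let (B, L) be a Banach SNL space with Banach SNL dual (B*, L̃), A a norm-closed linear L-positive subspace of B, and suppose for all d* ∈ B*, inf_{d ∈ B} [q_{L̃}(d* − Ld) + (1/2)‖d* − Ld‖²] ≤ 0. Then the following are equivalent: (i) A⁰ is L̃-negative; (ii) for all d* ∈ B*, inf_{a ∈ A} q_{L̃}(d* − La) ≤ 0; (iii) for all d* ∈ A⁰, inf_{a ∈ A} q_{L̃}(d* − La) ≤ 0. Moreover each of these implies that A is maximally L-positive. -/

import Mathlib

open NormedSpace

noncomputable def qL {B : Type*} [NormedAddCommGroup B] [NormedSpace ℝ B]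
    (L : B →L[ℝ] StrongDual ℝ B) (b : B) : ℝ := (1 / 2) * L b b

def LPositive {B : Type*} [NormedAddCommGroup B] [NormedSpace ℝ B]
    (L : B →L[ℝ] StrongDual ℝ B) (A : Set B) : Prop :=
  A.Nonempty ∧ ∀ b ∈ A, ∀ c ∈ A, 0 ≤ qL L (b - c)

def MaxLPositive {B : Type*} [NormedAddCommGroup B] [NormedSpace ℝ B]
    (L : B →L[ℝ] StrongDual ℝ B) (A : Set B) : Prop :=
  LPositive L A ∧ ∀ A' : Set B, LPositive L A' → A ⊆ A' → A' = A

/-!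
(ii) ⇒ (iii) is trivial, and (iii) ⇒ (i) holds because for `b'` in the annihilator
`q_{L̃}(b' - L a) = q_{L̃}(b') + q_L(a) ≥ q_{L̃}(b')`.

(i) ⇒ (ii): let `m` be the infimum and `a₀ ∈ A` with `q_{L̃}(d' - L a₀) ≤ m + t²`. Perturbing
`a₀` inside `A` shows that `s = d' - L a₀` has norm `O(t)` on `A`; a Hahn–Banach extension `e` of
`s|_A` with `‖e‖ = O(t)` gives `s - e ∈ A⁰`, so `q_{L̃}(s - e) ≤ 0`, and expanding
`q_{L̃}(s) = q_{L̃}(s - e) + L̃ s e - q_{L̃}(e)` yields `m ≤ O(t)`.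

Maximality: if `c ∉ A` were `L`-positively related to all of `A`, separate `c` from the closed
subspace `A` by `f ∈ A⁰` with `f c > 0`; (ii) at `d' = t f + L c` gives
`t f(c) + t² q_{L̃}(f) ≤ 0` for all `t > 0`, so `f c ≤ 0`.
-/

open Filter Topology

section Quadratic

variable {E : Type*} [NormedAddCommGroup E] [NormedSpace ℝ E] (L : E →L[ℝ] StrongDual ℝ E)

lemma qL_sub (hsym : ∀ p q : E, L q p = L p q) (p r : E) :
    qL L (p - r) = qL L p - L p r + qL L r := by
  simp only [qL, map_sub, sub_apply, hsym p r]
  ring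

lemma qL_smul (t : ℝ) (v : E) : qL L (t • v) = t ^ 2 * qL L v := by
  simp only [qL, map_smul, smul_apply, smul_eq_mul]
  ring

lemma abs_apply_apply_le_of_norm_le_one (hL : ‖L‖ ≤ 1) (p r : E) : |L p r| ≤ ‖p‖ * ‖r‖ :=
  calc |L p r| ≤ ‖L‖ * ‖p‖ * ‖r‖ := L.le_opNorm₂ p r
    _ ≤ 1 * ‖p‖ * ‖r‖ := by gcongr
    _ = ‖p‖ * ‖r‖ := by ring

lemma abs_qL_le (hL : ∀ p r : E, |L p r| ≤ ‖p‖ * ‖r‖) (v : E) : |qL L v| ≤ 1 / 2 * ‖v‖ ^ 2 := by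
  rw [qL, abs_mul, abs_of_pos (by norm_num : (0 : ℝ) < 1 / 2), sq]
  gcongr
  exact hL v v

end Quadratic

lemma le_zero_of_forall_le_mul {m K ε : ℝ} (hε : 0 < ε)
    (h : ∀ t : ℝ, 0 < t → t ≤ ε → m ≤ t * K) : m ≤ 0 := by
  have hlim : Tendsto (fun t : ℝ => t * K) (𝓝[>] 0) (𝓝 0) := by
    simpa using ((continuous_mul_const K).tendsto 0).mono_left nhdsWithin_le_nhds
  exact ge_of_tendsto hlim (eventually_of_mem (Ioc_mem_nhdsGT hε) fun t ht => h t ht.1 ht.2)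

section Subspace

variable {E : Type*} [NormedAddCommGroup E] [NormedSpace ℝ E] (A : Subspace ℝ E)

lemma abs_apply_le_of_le_sq_add {φ : StrongDual ℝ E} {t : ℝ} (ht : 0 < t)
    (h : ∀ v ∈ A, φ v ≤ t ^ 2 + 1 / 2 * ‖v‖ ^ 2) : ∀ v ∈ A, |φ v| ≤ 2 * t * ‖v‖ := by
  have hle : ∀ v ∈ A, φ v ≤ 2 * t * ‖v‖ := by
    intro v hv
    rcases eq_or_ne v 0 with rfl | hv0
    · simp
    have hn : 0 < ‖v‖ := norm_pos_iff.mpr hv0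
    -- test the inequality on the rescaled vector of norm `t`
    have hscaled := h ((t / ‖v‖) • v) (A.smul_mem _ hv)
    rw [map_smul, smul_eq_mul, norm_smul, Real.norm_of_nonneg (by positivity),
      div_mul_cancel₀ _ hn.ne'] at hscaled
    have : t * φ v ≤ t * (2 * t * ‖v‖) := by
      have := mul_le_mul_of_nonneg_left hscaled hn.le
      rw [← mul_assoc, mul_div_cancel₀ _ hn.ne'] at this
      nlinarith
    exact le_of_mul_le_mul_left this ht
  intro v hv
  refine abs_le.mpr ⟨?_, hle v hv⟩
  have := hle (-v) (A.neg_mem hv)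
  rw [map_neg, norm_neg] at this
  linarith

lemma exists_extension_norm_le_of_abs_le (φ : StrongDual ℝ E) {C : ℝ} (hC : 0 ≤ C)
    (h : ∀ v ∈ A, |φ v| ≤ C * ‖v‖) :
    ∃ e : StrongDual ℝ E, (∀ v ∈ A, e v = φ v) ∧ ‖e‖ ≤ C := by
  obtain ⟨e, he, hnorm⟩ := exists_extension_norm_eq A (φ.comp A.subtypeL)
  exact ⟨e, fun v hv => he ⟨v, hv⟩,
    hnorm ▸ ContinuousLinearMap.opNorm_le_bound _ hC fun v => h v v.2⟩

lemma exists_annihilator_pos_of_notMem (hA : IsClosed (A : Set E)) {c : E} (hc : c ∉ A) :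
    ∃ f : StrongDual ℝ E, (∀ a ∈ A, f a = 0) ∧ 0 < f c := by
  obtain ⟨f, u, hfA, hfc⟩ := geometric_hahn_banach_closed_point A.convex hA hc
  have hu : 0 < u := by simpa using hfA 0 A.zero_mem
  refine ⟨f, fun a ha => ?_, hu.trans hfc⟩
  by_contra hfa
  -- `f` would take the value `u` on `A`
  have := hfA _ (A.smul_mem (u / f a) ha)
  rw [map_smul, smul_eq_mul, div_mul_cancel₀ _ hfa] at this
  exact lt_irrefl u this

end Subspace

section DualPair

variable {B : Type*} [NormedAddCommGroup B] [NormedSpace ℝ B] {L : B →L[ℝ] StrongDual ℝ B}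
  {Lt : StrongDual ℝ B →L[ℝ] StrongDual ℝ (StrongDual ℝ B)}

lemma apply_L_apply (hdual : ∀ b : B, Lt (L b) = inclusionInDoubleDual ℝ B b)
    (x : B) (p : StrongDual ℝ B) : Lt (L x) p = p x := by
  rw [hdual]
  rfl

lemma qL_sub_L (hsymt : ∀ p q : StrongDual ℝ B, Lt q p = Lt p q)
    (hdual : ∀ b : B, Lt (L b) = inclusionInDoubleDual ℝ B b) (p : StrongDual ℝ B) (x : B) :
    qL Lt (p - L x) = qL Lt p - p x + qL L x := by
  rw [qL_sub Lt hsymt, hsymt, apply_L_apply hdual]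
  simp only [qL, apply_L_apply hdual]

variable (A : Subspace ℝ B)

lemma qL_le_iInf_qL_sub_L (hsymt : ∀ p q : StrongDual ℝ B, Lt q p = Lt p q)
    (hdual : ∀ b : B, Lt (L b) = inclusionInDoubleDual ℝ B b) (hpos : ∀ a ∈ A, 0 ≤ qL L a)
    {b' : StrongDual ℝ B} (hb' : ∀ a ∈ A, b' a = 0) :
    qL Lt b' ≤ ⨅ a : A, qL Lt (b' - L a) :=
  le_ciInf fun a => by
    rw [qL_sub_L hsymt hdual, hb' a a.2]
    linarith [hpos a a.2]

lemma apply_le_of_almost_min (hsymt : ∀ p q : StrongDual ℝ B, Lt q p = Lt p q)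
    (hdual : ∀ b : B, Lt (L b) = inclusionInDoubleDual ℝ B b) {d' : StrongDual ℝ B}
    {m ε : ℝ} {a₀ : B} (hmin : ∀ a ∈ A, m ≤ qL Lt (d' - L a)) (ha₀ : a₀ ∈ A)
    (hnear : qL Lt (d' - L a₀) ≤ m + ε) : ∀ v ∈ A, (d' - L a₀) v ≤ ε + qL L v := by
  intro v hv
  have h := hmin _ (A.add_mem ha₀ hv)
  rw [map_add, ← sub_sub, qL_sub_L hsymt hdual] at h
  linarith

lemma le_mul_of_almost_min (hL : ∀ x y : B, |L x y| ≤ ‖x‖ * ‖y‖)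
    (hLt : ∀ p q : StrongDual ℝ B, |Lt p q| ≤ ‖p‖ * ‖q‖)
    (hsymt : ∀ p q : StrongDual ℝ B, Lt q p = Lt p q)
    (hdual : ∀ b : B, Lt (L b) = inclusionInDoubleDual ℝ B b)
    (hneg : ∀ b' : StrongDual ℝ B, (∀ a ∈ A, b' a = 0) → qL Lt b' ≤ 0)
    {d' : StrongDual ℝ B} {m t : ℝ} (ht : 0 < t) (ht' : t ≤ 1 / 2) {a₀ : B}
    (hmin : ∀ a ∈ A, m ≤ qL Lt (d' - L a)) (ha₀ : a₀ ∈ A)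
    (hnear : qL Lt (d' - L a₀) ≤ m + t ^ 2) :
    m ≤ t * (2 * ‖d'‖ + 2 * (qL Lt d' - m) + 3) := by
  set s := d' - L a₀ with hs
  have hfo := apply_le_of_almost_min A hsymt hdual hmin ha₀ hnear
  obtain ⟨e, heA, he⟩ := exists_extension_norm_le_of_abs_le A s (by positivity)
    (abs_apply_le_of_le_sq_add A ht fun v hv =>
      (hfo v hv).trans (by linarith [le_abs_self (qL L v), abs_qL_le L hL v]))
  have hsplit : qL Lt (s - e) = qL Lt s - Lt s e + qL Lt e := qL_sub Lt hsymt s e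
  have hcross : Lt s e = Lt d' e - s a₀ := by
    rw [hs, map_sub, sub_apply, apply_L_apply hdual, heA a₀ ha₀]
  have hdiff_nonpos : qL Lt (s - e) ≤ 0 :=
    hneg _ fun a ha => by rw [sub_apply, heA a ha, sub_self]
  have hde : Lt d' e ≤ ‖d'‖ * (2 * t) :=
    calc Lt d' e ≤ ‖d'‖ * ‖e‖ := (le_abs_self _).trans (hLt d' e)
      _ ≤ ‖d'‖ * (2 * t) := by gcongr
  have he : -qL Lt e ≤ 2 * t ^ 2 := by
    have := abs_qL_le Lt hLt e
    nlinarith [neg_abs_le (qL Lt e), norm_nonneg e]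
  -- perturb `a₀` towards `0`
  have hsa : -s a₀ ≤ t + t * qL L a₀ := by
    have h := hfo ((-t) • a₀) (A.smul_mem _ ha₀)
    rw [map_smul, smul_eq_mul, qL_smul] at h
    nlinarith
  have hqs : qL Lt s = qL Lt d' - s a₀ - qL L a₀ := by
    rw [hs, qL_sub_L hsymt hdual, sub_apply, qL, qL]
    ring
  have hm : m ≤ qL Lt s := hmin a₀ ha₀
  have hmd : m ≤ qL Lt d' := by simpa using hmin 0 A.zero_mem
  -- `a₀` stays bounded as `t → 0`
  have hqa : qL L a₀ ≤ 2 * (qL Lt d' - m) + 1 := by nlinarith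
  nlinarith [mul_le_mul_of_nonneg_left hqa ht.le]

lemma iInf_qL_sub_L_le_zero (hL : ∀ x y : B, |L x y| ≤ ‖x‖ * ‖y‖)
    (hLt : ∀ p q : StrongDual ℝ B, |Lt p q| ≤ ‖p‖ * ‖q‖)
    (hsymt : ∀ p q : StrongDual ℝ B, Lt q p = Lt p q)
    (hdual : ∀ b : B, Lt (L b) = inclusionInDoubleDual ℝ B b)
    (hneg : ∀ b' : StrongDual ℝ B, (∀ a ∈ A, b' a = 0) → qL Lt b' ≤ 0)
    (d' : StrongDual ℝ B) : ⨅ a : A, qL Lt (d' - L a) ≤ 0 := by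
  by_cases hbdd : BddBelow (Set.range fun a : A => qL Lt (d' - L a))
  swap
  · exact (Real.iInf_of_not_bddBelow hbdd).le
  set m := ⨅ a : A, qL Lt (d' - L a)
  have hmin : ∀ a ∈ A, m ≤ qL Lt (d' - L a) := fun a ha => ciInf_le hbdd ⟨a, ha⟩
  refine le_zero_of_forall_le_mul (K := 2 * ‖d'‖ + 2 * (qL Lt d' - m) + 3)
    (by norm_num : (0 : ℝ) < 1 / 2) fun t ht ht' => ?_
  obtain ⟨a₀, ha₀⟩ := exists_lt_of_ciInf_lt (lt_add_of_pos_right m (pow_pos ht 2))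
  exact le_mul_of_almost_min A hL hLt hsymt hdual hneg ht ht' hmin a₀.2 ha₀.le

lemma maxLPositive_of_forall_iInf_le_zero (hsymt : ∀ p q : StrongDual ℝ B, Lt q p = Lt p q)
    (hdual : ∀ b : B, Lt (L b) = inclusionInDoubleDual ℝ B b) (hclosed : IsClosed (A : Set B))
    (hpos : ∀ a ∈ A, 0 ≤ qL L a) (hinf : ∀ d' : StrongDual ℝ B, ⨅ a : A, qL Lt (d' - L a) ≤ 0) :
    MaxLPositive L (A : Set B) := by
  refine ⟨⟨⟨0, A.zero_mem⟩, fun b hb c hc => hpos _ (A.sub_mem hb hc)⟩,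
    fun A' hA' hsub => Set.Subset.antisymm (fun c hc => ?_) hsub⟩
  by_contra hcA
  obtain ⟨f, hfA, hfc⟩ := exists_annihilator_pos_of_notMem A hclosed hcA
  suffices f c ≤ 0 from hfc.not_ge this
  refine le_zero_of_forall_le_mul (K := -qL Lt f) one_pos fun t ht _ => ?_
  have hlow : ∀ a : A, t * f c + t ^ 2 * qL Lt f ≤ qL Lt (t • f + L c - L a) := fun a => by
    rw [show t • f + L c - L a = t • f - L (a - c) by rw [map_sub]; abel,
      qL_sub_L hsymt hdual, qL_smul, smul_apply, map_sub, hfA a a.2]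
    have := hA'.2 a (hsub a.2) c hc
    simp only [smul_eq_mul] at this ⊢
    linarith
  have h := (le_ciInf hlow).trans (hinf (t • f + L c))
  have : t * f c ≤ t * (t * -qL Lt f) := by linarith
  exact le_of_mul_le_mul_left this ht

end DualPair

theorem stmt15_general {B : Type*} [NormedAddCommGroup B] [NormedSpace ℝ B]
    (L : B →L[ℝ] StrongDual ℝ B) (hL : ‖L‖ ≤ 1)
    (Lt : StrongDual ℝ B →L[ℝ] StrongDual ℝ (StrongDual ℝ B)) (hLt : @Norm.norm _ (@ContinuousLinearMap.hasOpNorm ℝ ℝ (StrongDual ℝ B) (StrongDual ℝ (StrongDual ℝ B)) _ _ _ _ _ _ (RingHom.id ℝ)) Lt ≤ 1)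
    (hsymt : ∀ p q : StrongDual ℝ B, Lt q p = Lt p q)
    (hdual : ∀ b : B, Lt (L b) = inclusionInDoubleDual ℝ B b)
    (A : Subspace ℝ B) (hclosed : IsClosed (A : Set B))
    (hpos : ∀ a ∈ A, 0 ≤ qL L a) :
    -- (i) ↔ (ii)
    ((∀ b' : StrongDual ℝ B, (∀ a ∈ A, b' a = 0) → qL Lt b' ≤ 0) ↔
      (∀ d' : StrongDual ℝ B, ⨅ a : A, qL Lt (d' - L a) ≤ 0)) ∧
    -- (ii) ↔ (iii)
    ((∀ d' : StrongDual ℝ B, ⨅ a : A, qL Lt (d' - L a) ≤ 0) ↔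
      (∀ d' : StrongDual ℝ B, (∀ a ∈ A, d' a = 0) → ⨅ a : A, qL Lt (d' - L a) ≤ 0)) ∧
    -- (i) → A is maximally L-positive
    ((∀ b' : StrongDual ℝ B, (∀ a ∈ A, b' a = 0) → qL Lt b' ≤ 0) →
      MaxLPositive L (A : Set B)) := by
  have i_ii := fun hi => iInf_qL_sub_L_le_zero A (abs_apply_apply_le_of_norm_le_one L hL)
    (abs_apply_apply_le_of_norm_le_one Lt hLt) hsymt hdual hi
  have iii_i : (∀ d' : StrongDual ℝ B, (∀ a ∈ A, d' a = 0) → ⨅ a : A, qL Lt (d' - L a) ≤ 0) →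
      ∀ b' : StrongDual ℝ B, (∀ a ∈ A, b' a = 0) → qL Lt b' ≤ 0 :=
    fun hiii b' hb' => (qL_le_iInf_qL_sub_L A hsymt hdual hpos hb').trans (hiii b' hb')
  exact ⟨⟨i_ii, fun hii => iii_i fun d' _ => hii d'⟩,
    ⟨fun hii d' _ => hii d', fun hiii => i_ii (iii_i hiii)⟩,
    fun hi => maxLPositive_of_forall_iInf_le_zero A hsymt hdual hclosed hpos (i_ii hi)⟩

theorem stmt15 {B : Type*} [NormedAddCommGroup B] [NormedSpace ℝ B] [CompleteSpace B]
    [Nontrivial B]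
    (L : B →L[ℝ] StrongDual ℝ B) (hL : ‖L‖ ≤ 1)
    (hsym : ∀ b c : B, L c b = L b c)
    (Lt : StrongDual ℝ B →L[ℝ] StrongDual ℝ (StrongDual ℝ B)) (hLt : @Norm.norm _ (@ContinuousLinearMap.hasOpNorm ℝ ℝ (StrongDual ℝ B) (StrongDual ℝ (StrongDual ℝ B)) _ _ _ _ _ _ (RingHom.id ℝ)) Lt ≤ 1)
    (hsymt : ∀ p q : StrongDual ℝ B, Lt q p = Lt p q)
    (hdual : ∀ b : B, Lt (L b) = inclusionInDoubleDual ℝ B b)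
    (A : Subspace ℝ B) (hclosed : IsClosed (A : Set B))
    (hpos : ∀ a ∈ A, 0 ≤ qL L a)
    -- hypothesis (17)
    (h17 : ∀ d' : StrongDual ℝ B,
      ⨅ d : B, (qL Lt (d' - L d) + (1 / 2) * ‖d' - L d‖ ^ 2) ≤ 0) :
    -- (i) ↔ (ii)
    ((∀ b' : StrongDual ℝ B, (∀ a ∈ A, b' a = 0) → qL Lt b' ≤ 0) ↔
      (∀ d' : StrongDual ℝ B, ⨅ a : A, qL Lt (d' - L a) ≤ 0)) ∧
    -- (ii) ↔ (iii)
    ((∀ d' : StrongDual ℝ B, ⨅ a : A, qL Lt (d' - L a) ≤ 0) ↔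
      (∀ d' : StrongDual ℝ B, (∀ a ∈ A, d' a = 0) → ⨅ a : A, qL Lt (d' - L a) ≤ 0)) ∧
    -- (i) → A is maximally L-positive
    ((∀ b' : StrongDual ℝ B, (∀ a ∈ A, b' a = 0) → qL Lt b' ≤ 0) →
      MaxLPositive L (A : Set B)) :=
  stmt15_general L hL Lt hLt hsymt hdual A hclosed hpos
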